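/- arXiv:1101.5959 — 2 statements merged into one kernel-verified Lean document; each statement's English description precedes it below -/
import Mathlib

section
/- Under the assumptions of the composition openness theorem (F₁ L-open around (x̄,ȳ), F₂ M-Lipschitz-like around (x̄,z̄), G C-open in y uniformly in z and D-Lipschitz-like in z uniformly in y around ((ȳ,z̄),w̄), graphs locally closed, LC − MD > 0), there exists ε > 0 such that for every ρ ∈ (0, ε/2) and every (x,y,z,w) ∈ B(x̄,ε/2) × B(ȳ,ε/2) × B(z̄,ε/2) × B(w̄,ε/2) with y ∈ F₁(x), z ∈ F₂(x), and w ∈ G(y,z), one has B(w, (LC−MD)ρ) ⊆ H(B(x,ρ)), where H(x) := G(F₁(x), F₂(x)). -/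
/-!
Lyusternik–Graves iteration. Given `w ∈ G y z` and a target `w'`, freeze `z` and use the
`C`-openness of `G` in `y` to find `y'` near `y` with `w' ∈ G y' z`; the `L`-openness of `F₁`
gives `x'` near `x` with `y' ∈ F₁ x'`; the Lipschitz-likeness of `F₂` moves `z` to `z' ∈ F₂ x'`,
and that of `G` in `z` gives `w'' ∈ G y' z'` with `‖w' - w''‖ ≤ M D ‖x - x'‖`. A step of size `τ`
in `x` thus shrinks an error below `L C τ` to at most `M D τ`, so when `M D < L C` the steps
decrease geometrically, the iterates converge, the local closedness of the graphs puts the limit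
on them, and the total displacement of `x` stays below `ρ` when `dist w' w < (L C - M D) ρ`.
-/

open Set Metric Filter Topology Pointwise

section Regularity

variable {X Y : Type*}

def IsOpenAtRateOn [PseudoMetricSpace X] [PseudoMetricSpace Y] (F : X → Set Y) (L ε : ℝ)
    (U : Set X) (V : Set Y) : Prop :=
  ∀ ρ ∈ Ioo (0:ℝ) ε, ∀ x ∈ U, ∀ y ∈ V, y ∈ F x → ball y (ρ * L) ⊆ ⋃ x' ∈ ball x ρ, F x'

def IsLipschitzLikeOn [SeminormedAddCommGroup X] [SeminormedAddCommGroup Y] [NormedSpace ℝ Y]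
    (F : X → Set Y) (M : ℝ) (U : Set X) (V : Set Y) : Prop :=
  ∀ x ∈ U, ∀ u ∈ U, F x ∩ V ⊆ F u + (M * ‖x - u‖) • closedBall (0:Y) 1

namespace IsOpenAtRateOn

variable [PseudoMetricSpace X] [PseudoMetricSpace Y] {F : X → Set Y} {L ε ε' ρ : ℝ}
  {U U' : Set X} {V V' : Set Y} {x : X} {y y' : Y}

theorem mono (h : IsOpenAtRateOn F L ε U V) (hε : ε' ≤ ε) (hU : U' ⊆ U) (hV : V' ⊆ V) :
    IsOpenAtRateOn F L ε' U' V' :=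
  fun ρ hρ x hx y hy hyx => h ρ ⟨hρ.1, hρ.2.trans_le hε⟩ x (hU hx) y (hV hy) hyx

theorem exists_dist_lt (h : IsOpenAtRateOn F L ε U V) (hρ : 0 < ρ) (hρε : ρ < ε) (hx : x ∈ U)
    (hy : y ∈ V) (hyx : y ∈ F x) (hy' : dist y' y < ρ * L) : ∃ x', dist x' x < ρ ∧ y' ∈ F x' := by
  simpa only [mem_iUnion, exists_prop, mem_ball] using
    h ρ ⟨hρ, hρε⟩ x hx y hy hyx (mem_ball.2 hy')

end IsOpenAtRateOn

namespace IsLipschitzLikeOn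

variable [SeminormedAddCommGroup X] [SeminormedAddCommGroup Y] [NormedSpace ℝ Y]
  {F : X → Set Y} {M : ℝ} {U U' : Set X} {V V' : Set Y} {x u : X} {y : Y}

theorem mono (h : IsLipschitzLikeOn F M U V) (hU : U' ⊆ U) (hV : V' ⊆ V) :
    IsLipschitzLikeOn F M U' V' :=
  fun x hx u hu => (inter_subset_inter_right _ hV).trans (h x (hU hx) u (hU hu))

theorem exists_dist_le (h : IsLipschitzLikeOn F M U V) (hM : 0 ≤ M) (hx : x ∈ U) (hu : u ∈ U)
    (hy : y ∈ F x) (hyV : y ∈ V) : ∃ y' ∈ F u, dist y y' ≤ M * dist x u := by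
  obtain ⟨y', hy', _, ⟨v, hv, rfl⟩, rfl⟩ := h x hx u hu ⟨hy, hyV⟩
  refine ⟨y', hy', ?_⟩
  rw [dist_eq_norm, add_sub_cancel_left, norm_smul, Real.norm_of_nonneg (by positivity),
    ← dist_eq_norm]
  exact mul_le_of_le_one_right (by positivity) (mem_closedBall_zero_iff.1 hv)

end IsLipschitzLikeOn

theorem eventually_isClosed_inter_closedBall [PseudoMetricSpace X] {S : Set X} {p : X}
    (h : ∃ r > 0, IsClosed (S ∩ closedBall p r)) :
    ∀ᶠ r in 𝓝 (0:ℝ), IsClosed (S ∩ closedBall p r) := by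
  obtain ⟨r₀, hr₀, h⟩ := h
  filter_upwards [eventually_le_nhds hr₀] with r hr
  rw [← inter_eq_right.2 (closedBall_subset_closedBall hr), ← inter_assoc]
  exact h.inter isClosed_closedBall

end Regularity

theorem exists_seq_of_forall_exists_succ {α : Type*} {P : ℕ → α → Prop} {R : ℕ → α → α → Prop}
    {a : α} (h₀ : P 0 a) (h : ∀ n a, P n a → ∃ b, P (n + 1) b ∧ R n a b) :
    ∃ u : ℕ → α, ∀ n, P n (u n) ∧ R n (u n) (u (n + 1)) := by
  choose! f hf using h
  let u : ℕ → α := fun n => Nat.rec a f n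
  have hu : ∀ n, P n (u n) := fun n => by
    induction n with
    | zero => exact h₀
    | succ n ih => exact (hf n _ ih).1
  exact ⟨u, fun n => ⟨hu n, (hf n _ (hu n)).2⟩⟩

theorem exists_geometric_ratio {a b t ρ : ℝ} (ha : 0 < a) (hb : 0 ≤ b) (ht : 0 ≤ t) (hρ : 0 < ρ)
    (htρ : t < (a - b) * ρ) :
    ∃ q S : ℝ, 0 < q ∧ q < 1 ∧ b < a * q ∧ 0 < S ∧ S < ρ ∧ t < a * (1 - q) * S := by
  have haρ : 0 < a * ρ := mul_pos ha hρ
  obtain ⟨q, hbq, hqt⟩ : ∃ q, b / a < q ∧ q < 1 - t / (a * ρ) := exists_between <| by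
    rw [lt_sub_iff_add_lt, div_add_div _ _ ha.ne' haρ.ne', div_lt_one (by positivity)]
    nlinarith
  have hq0 : 0 < q := (div_nonneg hb ha.le).trans_lt hbq
  have hq1 : 0 < 1 - q := by linarith [div_nonneg ht haρ.le]
  have haq : 0 < a * (1 - q) := mul_pos ha hq1
  obtain ⟨S, htS, hSρ⟩ : ∃ S, t / (a * (1 - q)) < S ∧ S < ρ := exists_between <| by
    rw [div_lt_iff₀ haq]
    rw [lt_sub_comm, div_lt_iff₀ haρ] at hqt
    linarith
  exact ⟨q, S, hq0, by linarith, (div_lt_iff₀' ha).1 hbq, (div_nonneg ht haq.le).trans_lt htS,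
    hSρ, (div_lt_iff₀' haq).1 htS⟩

def compositionMap {X Y Z W : Type*} (F₁ : X → Set Y) (F₂ : X → Set Z) (G : Y → Z → Set W)
    (x : X) : Set W :=
  ⋃ y ∈ F₁ x, ⋃ z ∈ F₂ x, G y z

section Composition

variable {X Y Z W : Type*} [SeminormedAddCommGroup X] [PseudoMetricSpace Y]
  [SeminormedAddCommGroup Z] [NormedSpace ℝ Z] [SeminormedAddCommGroup W] [NormedSpace ℝ W]

structure CompositionRegularOn (F₁ : X → Set Y) (F₂ : X → Set Z) (G : Y → Z → Set W)
    (x₀ : X) (y₀ : Y) (z₀ : Z) (w₀ : W) (L M C D r : ℝ) : Prop where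
  isOpenAtRateOn₁ : IsOpenAtRateOn F₁ L r (ball x₀ r) (ball y₀ r)
  isLipschitzLikeOn₂ : IsLipschitzLikeOn F₂ M (ball x₀ r) (ball z₀ r)
  isOpenAtRateOn_G : ∀ z ∈ ball z₀ r, IsOpenAtRateOn (G · z) C r (ball y₀ r) (ball w₀ r)
  isLipschitzLikeOn_G : ∀ y ∈ ball y₀ r, IsLipschitzLikeOn (G y) D (ball z₀ r) (ball w₀ r)
  isClosed₁ : IsClosed ({q : X × Y | q.2 ∈ F₁ q.1} ∩ closedBall (x₀, y₀) r)
  isClosed₂ : IsClosed ({q : X × Z | q.2 ∈ F₂ q.1} ∩ closedBall (x₀, z₀) r)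
  isClosed_G : IsClosed ({q : (Y × Z) × W | q.2 ∈ G q.1.1 q.1.2} ∩ closedBall ((y₀, z₀), w₀) r)

variable {F₁ : X → Set Y} {F₂ : X → Set Z} {G : Y → Z → Set W} {x₀ : X} {y₀ : Y} {z₀ : Z}
  {w₀ : W} {L M C D r : ℝ}

theorem eventually_compositionRegularOn
    (h₁ : ∃ ε > 0, ∃ U ∈ 𝓝 x₀, ∃ V ∈ 𝓝 y₀, IsOpenAtRateOn F₁ L ε U V)
    (h₂ : ∃ U ∈ 𝓝 x₀, ∃ V ∈ 𝓝 z₀, IsLipschitzLikeOn F₂ M U V)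
    (hGo : ∃ ε > 0, ∃ V ∈ 𝓝 y₀, ∃ V' ∈ 𝓝 z₀, ∃ V'' ∈ 𝓝 w₀,
      ∀ z ∈ V', IsOpenAtRateOn (G · z) C ε V V'')
    (hGl : ∃ V ∈ 𝓝 y₀, ∃ V' ∈ 𝓝 z₀, ∃ V'' ∈ 𝓝 w₀, ∀ y ∈ V, IsLipschitzLikeOn (G y) D V' V'')
    (hcl₁ : ∃ r > 0, IsClosed ({q : X × Y | q.2 ∈ F₁ q.1} ∩ closedBall (x₀, y₀) r))
    (hcl₂ : ∃ r > 0, IsClosed ({q : X × Z | q.2 ∈ F₂ q.1} ∩ closedBall (x₀, z₀) r))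
    (hclG : ∃ r > 0, IsClosed ({q : (Y × Z) × W | q.2 ∈ G q.1.1 q.1.2} ∩
      closedBall ((y₀, z₀), w₀) r)) :
    ∀ᶠ r in 𝓝 0, CompositionRegularOn F₁ F₂ G x₀ y₀ z₀ w₀ L M C D r := by
  obtain ⟨ε₁, hε₁, U₁, hU₁, V₁, hV₁, h₁⟩ := h₁
  obtain ⟨U₂, hU₂, V₂, hV₂, h₂⟩ := h₂
  obtain ⟨εG, hεG, Vy, hVy, Vz, hVz, Vw, hVw, hGo⟩ := hGo
  obtain ⟨Vy', hVy', Vz', hVz', Vw', hVw', hGl⟩ := hGl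
  filter_upwards [eventually_le_nhds hε₁, eventually_ball_subset hU₁, eventually_ball_subset hV₁,
    eventually_ball_subset hU₂, eventually_ball_subset hV₂, eventually_le_nhds hεG,
    eventually_ball_subset hVy, eventually_ball_subset hVz, eventually_ball_subset hVw,
    eventually_ball_subset hVy', eventually_ball_subset hVz', eventually_ball_subset hVw',
    eventually_isClosed_inter_closedBall hcl₁, eventually_isClosed_inter_closedBall hcl₂,
    eventually_isClosed_inter_closedBall hclG]
    with r hr₁ hU₁ hV₁ hU₂ hV₂ hrG hVy hVz hVw hVy' hVz' hVw' hcl₁ hcl₂ hclG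
  exact ⟨h₁.mono hr₁ hU₁ hV₁, h₂.mono hU₂ hV₂, fun z hz => (hGo z (hVz hz)).mono hrG hVy hVw,
    fun y hy => (hGl y (hVy' hy)).mono hVz' hVw', hcl₁, hcl₂, hclG⟩

namespace CompositionRegularOn

theorem exists_step (h : CompositionRegularOn F₁ F₂ G x₀ y₀ z₀ w₀ L M C D r) (hL : 0 < L)
    (hM : 0 ≤ M) (hD : 0 ≤ D) {a : X} {b : Y} {c : Z} {d w : W} {τ : ℝ} (hτ : 0 < τ)
    (hb : b ∈ F₁ a) (hc : c ∈ F₂ a) (hd : d ∈ G b c) (ha₀ : dist a x₀ + τ < r)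
    (hb₀ : dist b y₀ + L * τ < r) (hc₀ : dist c z₀ + M * τ < r) (hd₀ : dist d w₀ < r)
    (hw₀ : dist w w₀ < r) (hwd : dist w d < L * τ * C) :
    ∃ a' b' c' d', b' ∈ F₁ a' ∧ c' ∈ F₂ a' ∧ d' ∈ G b' c' ∧
      dist a a' < τ ∧ dist b b' < L * τ ∧ dist c c' ≤ M * τ ∧ dist w d' ≤ D * (M * τ) := by
  have hLτ : 0 < L * τ := mul_pos hL hτ
  have hMτ : 0 ≤ M * τ := mul_nonneg hM hτ.le
  have ha : a ∈ ball x₀ r := mem_ball.2 (by linarith)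
  have hbr : b ∈ ball y₀ r := mem_ball.2 (by linarith)
  have hcr : c ∈ ball z₀ r := mem_ball.2 (by linarith)
  obtain ⟨b', hbb', hb'⟩ := (h.isOpenAtRateOn_G c hcr).exists_dist_lt hLτ
    (by linarith [dist_nonneg (x := b) (y := y₀)]) hbr (mem_ball.2 hd₀) hd hwd
  obtain ⟨a', haa', ha'⟩ := h.isOpenAtRateOn₁.exists_dist_lt hτ
    (by linarith [dist_nonneg (x := a) (y := x₀)]) ha hbr hb (by rwa [mul_comm])
  have ha'r : a' ∈ ball x₀ r := mem_ball.2 (by linarith [dist_triangle a' a x₀])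
  obtain ⟨c', hc', hcc'⟩ := h.isLipschitzLikeOn₂.exists_dist_le hM ha ha'r hc hcr
  replace hcc' : dist c c' ≤ M * τ :=
    hcc'.trans (mul_le_mul_of_nonneg_left (by rw [dist_comm]; exact haa'.le) hM)
  have hb'r : b' ∈ ball y₀ r := mem_ball.2 (by linarith [dist_triangle b' b y₀])
  have hc'r : c' ∈ ball z₀ r := mem_ball.2 (by linarith [dist_triangle c' c z₀, dist_comm c c'])
  obtain ⟨d', hd', hwd'⟩ :=
    (h.isLipschitzLikeOn_G b' hb'r).exists_dist_le hD hcr hc'r hb' (mem_ball.2 hw₀)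
  exact ⟨a', b', c', d', ha', hc', hd', by rwa [dist_comm], by rwa [dist_comm], hcc',
    hwd'.trans (mul_le_mul_of_nonneg_left hcc' hD)⟩

theorem exists_next_iterate (h : CompositionRegularOn F₁ F₂ G x₀ y₀ z₀ w₀ L M C D r)
    (hL : 0 < L) (hM : 0 ≤ M) (hD : 0 ≤ D) {q S s : ℝ} (hq0 : 0 ≤ q) (hq1 : q < 1)
    (hqMD : M * D < L * C * q) (hs : 0 < s) (hsS : s ≤ S) {x : X} {y : Y} {z : Z} {w : W}
    (hx : dist x x₀ + S < r) (hy : dist y y₀ + L * S < r) (hz : dist z z₀ + M * S < r)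
    (hw : dist w w₀ + L * C * S < r) {a : X} {b : Y} {c : Z} {d : W}
    (hb : b ∈ F₁ a) (hc : c ∈ F₂ a) (hd : d ∈ G b c) (hax : dist a x ≤ S - s)
    (hby : dist b y ≤ L * (S - s)) (hcz : dist c z ≤ M * (S - s))
    (hwd : dist w d < L * C * ((1 - q) * s)) :
    ∃ a' b' c' d', b' ∈ F₁ a' ∧ c' ∈ F₂ a' ∧ d' ∈ G b' c' ∧
      dist a' x ≤ S - q * s ∧ dist b' y ≤ L * (S - q * s) ∧ dist c' z ≤ M * (S - q * s) ∧
      dist w d' < L * C * ((1 - q) * (q * s)) ∧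
      dist a a' ≤ (1 - q) * s ∧ dist b b' ≤ L * ((1 - q) * s) ∧ dist c c' ≤ M * ((1 - q) * s) := by
  have hτ : 0 < (1 - q) * s := mul_pos (by linarith) hs
  have hqs : 0 ≤ q * s := mul_nonneg hq0 hs.le
  have hLC : 0 < L * C := pos_of_mul_pos_left ((mul_nonneg hM hD).trans_lt hqMD) hq0
  obtain ⟨a', b', c', d', hb', hc', hd', haa', hbb', hcc', hwd'⟩ := h.exists_step hL hM hD hτ
    hb hc hd (by nlinarith [dist_triangle a x x₀]) (by nlinarith [dist_triangle b y y₀])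
    (by nlinarith [dist_triangle c z z₀]) (by nlinarith [dist_triangle d w w₀, dist_comm d w])
    (by nlinarith [dist_nonneg (x := w) (y := w₀)]) (by linarith)
  refine ⟨a', b', c', d', hb', hc', hd', ?_, ?_, ?_, ?_, haa'.le, hbb'.le, hcc'⟩
  · linarith [dist_triangle a' a x, dist_comm a a']
  · linarith [dist_triangle b' b y, dist_comm b b']
  · linarith [dist_triangle c' c z, dist_comm c c']
  · calc dist w d' ≤ M * D * ((1 - q) * s) := by linarith
      _ < L * C * q * ((1 - q) * s) := mul_lt_mul_of_pos_right hqMD hτ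
      _ = L * C * ((1 - q) * (q * s)) := by ring

theorem exists_iterates (h : CompositionRegularOn F₁ F₂ G x₀ y₀ z₀ w₀ L M C D r)
    (hL : 0 < L) (hM : 0 ≤ M) (hD : 0 ≤ D) {q S : ℝ} (hq0 : 0 < q) (hq1 : q < 1)
    (hqMD : M * D < L * C * q) (hS : 0 < S) {x : X} {y : Y} {z : Z} {w w' : W}
    (hx : dist x x₀ + S < r) (hy : dist y y₀ + L * S < r) (hz : dist z z₀ + M * S < r)
    (hw' : dist w' w₀ + L * C * S < r) (hyx : y ∈ F₁ x) (hzx : z ∈ F₂ x) (hw : w ∈ G y z)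
    (hww' : dist w' w < L * C * ((1 - q) * S)) :
    ∃ (a : ℕ → X) (b : ℕ → Y) (c : ℕ → Z) (d : ℕ → W),
      (∀ n, b n ∈ F₁ (a n) ∧ c n ∈ F₂ (a n) ∧ d n ∈ G (b n) (c n)) ∧
      (∀ n, a n ∈ closedBall x₀ r ∧ b n ∈ closedBall y₀ r ∧ c n ∈ closedBall z₀ r ∧
        d n ∈ closedBall w₀ r) ∧
      (∀ n, dist (a n) x ≤ S) ∧
      (∀ n, dist (a n) (a (n + 1)) ≤ (1 - q) * S * q ^ n) ∧
      (∀ n, dist (b n) (b (n + 1)) ≤ L * ((1 - q) * S) * q ^ n) ∧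
      (∀ n, dist (c n) (c (n + 1)) ≤ M * ((1 - q) * S) * q ^ n) ∧
      ∀ n, dist (d n) w' ≤ L * C * ((1 - q) * S) * q ^ n := by
  -- After `n` steps the unspent budget is `S * q ^ n`; the next step spends the fraction `1 - q`.
  let P : ℕ → X × Y × Z × W → Prop := fun n p =>
    p.2.1 ∈ F₁ p.1 ∧ p.2.2.1 ∈ F₂ p.1 ∧ p.2.2.2 ∈ G p.2.1 p.2.2.1 ∧
      dist p.1 x ≤ S - S * q ^ n ∧ dist p.2.1 y ≤ L * (S - S * q ^ n) ∧
      dist p.2.2.1 z ≤ M * (S - S * q ^ n) ∧ dist w' p.2.2.2 < L * C * ((1 - q) * (S * q ^ n))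
  let R : ℕ → X × Y × Z × W → X × Y × Z × W → Prop := fun n p p' =>
    dist p.1 p'.1 ≤ (1 - q) * S * q ^ n ∧ dist p.2.1 p'.2.1 ≤ L * ((1 - q) * S) * q ^ n ∧
      dist p.2.2.1 p'.2.2.1 ≤ M * ((1 - q) * S) * q ^ n
  have hSq : ∀ n, S * q ^ n ≤ S := fun n => mul_le_of_le_one_right hS.le (pow_le_one₀ hq0.le hq1.le)
  have hP₀ : P 0 (x, y, z, w) := by simp [P, hyx, hzx, hw, hww']
  have hstep : ∀ n p, P n p → ∃ p', P (n + 1) p' ∧ R n p p' := by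
    rintro n ⟨a, b, c, d⟩ ⟨hb, hc, hd, hax, hby, hcz, hwd⟩
    obtain ⟨a', b', c', d', hb', hc', hd', ha'x, hb'y, hc'z, hwd', haa', hbb', hcc'⟩ :=
      h.exists_next_iterate hL hM hD hq0.le hq1 hqMD (by positivity) (hSq n) hx hy hz hw'
        hb hc hd hax hby hcz hwd
    have e : S * q ^ (n + 1) = q * (S * q ^ n) := by ring
    refine ⟨(a', b', c', d'), ?_, haa'.trans_eq (by ring), hbb'.trans_eq (by ring),
      hcc'.trans_eq (by ring)⟩
    simp only [P, e]
    exact ⟨hb', hc', hd', ha'x, hb'y, hc'z, hwd'⟩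
  obtain ⟨u, hu⟩ := exists_seq_of_forall_exists_succ hP₀ hstep
  refine ⟨fun n => (u n).1, fun n => (u n).2.1, fun n => (u n).2.2.1, fun n => (u n).2.2.2, ?_⟩
  simp only [← forall_and]
  intro n
  obtain ⟨⟨hb, hc, hd, hax, hby, hcz, hwd⟩, haa', hbb', hcc'⟩ := hu n
  have hSn : 0 ≤ S * q ^ n := by positivity
  have hLC : 0 < L * C := pos_of_mul_pos_left ((mul_nonneg hM hD).trans_lt hqMD) hq0.le
  have hτS : (1 - q) * (S * q ^ n) ≤ S := by nlinarith [hSq n]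
  refine ⟨⟨hb, hc, hd⟩, ⟨?_, ?_, ?_, ?_⟩, by linarith, haa', hbb', hcc', ?_⟩
  · exact mem_closedBall.2 (by linarith [dist_triangle (u n).1 x x₀])
  · exact mem_closedBall.2 (by nlinarith [dist_triangle (u n).2.1 y y₀])
  · exact mem_closedBall.2 (by nlinarith [dist_triangle (u n).2.2.1 z z₀])
  · exact mem_closedBall.2
      (by nlinarith [dist_triangle (u n).2.2.2 w' w₀, dist_comm w' (u n).2.2.2])
  · rw [dist_comm]
    exact hwd.le.trans_eq (by ring)

theorem mem_of_tendsto (h : CompositionRegularOn F₁ F₂ G x₀ y₀ z₀ w₀ L M C D r)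
    {a : ℕ → X} {b : ℕ → Y} {c : ℕ → Z} {d : ℕ → W} {a' : X} {b' : Y} {c' : Z} {d' : W}
    (ha : Tendsto a atTop (𝓝 a')) (hb : Tendsto b atTop (𝓝 b')) (hc : Tendsto c atTop (𝓝 c'))
    (hd : Tendsto d atTop (𝓝 d'))
    (hmem : ∀ n, b n ∈ F₁ (a n) ∧ c n ∈ F₂ (a n) ∧ d n ∈ G (b n) (c n))
    (hball : ∀ n, a n ∈ closedBall x₀ r ∧ b n ∈ closedBall y₀ r ∧ c n ∈ closedBall z₀ r ∧
      d n ∈ closedBall w₀ r) :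
    b' ∈ F₁ a' ∧ c' ∈ F₂ a' ∧ d' ∈ G b' c' := by
  have h₁ := h.isClosed₁
  have h₂ := h.isClosed₂
  have hG := h.isClosed_G
  simp only [← closedBall_prod_same] at h₁ h₂ hG
  refine ⟨(h₁.mem_of_tendsto (ha.prodMk_nhds hb) (.of_forall fun n =>
      ⟨(hmem n).1, (hball n).1, (hball n).2.1⟩)).1,
    (h₂.mem_of_tendsto (ha.prodMk_nhds hc) (.of_forall fun n =>
      ⟨(hmem n).2.1, (hball n).1, (hball n).2.2.1⟩)).1,
    (hG.mem_of_tendsto ((hb.prodMk_nhds hc).prodMk_nhds hd) (.of_forall fun n =>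
      ⟨(hmem n).2.2, ⟨(hball n).2.1, (hball n).2.2.1⟩, (hball n).2.2.2⟩)).1⟩

theorem exists_mem_compositionMap (h : CompositionRegularOn F₁ F₂ G x₀ y₀ z₀ w₀ L M C D r)
    [CompleteSpace X] [CompleteSpace Y] [CompleteSpace Z]
    (hL : 0 < L) (hM : 0 ≤ M) (hD : 0 ≤ D) (hrate : 0 < L * C - M * D) {ρ : ℝ} (hρ : 0 < ρ)
    {x : X} {y : Y} {z : Z} {w w' : W} (hx : dist x x₀ + ρ < r) (hy : dist y y₀ + L * ρ < r)
    (hz : dist z z₀ + M * ρ < r) (hw' : dist w' w₀ + L * C * ρ < r) (hyx : y ∈ F₁ x)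
    (hzx : z ∈ F₂ x) (hw : w ∈ G y z) (hww' : dist w' w < (L * C - M * D) * ρ) :
    ∃ x', dist x' x < ρ ∧ w' ∈ compositionMap F₁ F₂ G x' := by
  have hLC : 0 < L * C := by linarith [mul_nonneg hM hD]
  obtain ⟨q, S, hq0, hq1, hqMD, hS, hSρ, hww'⟩ :=
    exists_geometric_ratio hLC (mul_nonneg hM hD) dist_nonneg hρ hww'
  obtain ⟨a, b, c, d, hmem, hball, hax, ha, hb, hc, hd⟩ := h.exists_iterates hL hM hD hq0 hq1
    hqMD hS (by linarith) (by nlinarith) (by nlinarith) (by nlinarith) hyx hzx hw (by linarith)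
  obtain ⟨a', ha⟩ := cauchySeq_tendsto_of_complete (cauchySeq_of_le_geometric q _ hq1 ha)
  obtain ⟨b', hb⟩ := cauchySeq_tendsto_of_complete (cauchySeq_of_le_geometric q _ hq1 hb)
  obtain ⟨c', hc⟩ := cauchySeq_tendsto_of_complete (cauchySeq_of_le_geometric q _ hq1 hc)
  replace hd : Tendsto d atTop (𝓝 w') := tendsto_iff_dist_tendsto_zero.2 <|
    squeeze_zero (fun _ => dist_nonneg) hd <| by
      simpa using (tendsto_pow_atTop_nhds_zero_of_lt_one hq0.le hq1).const_mul
        (L * C * ((1 - q) * S))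
  obtain ⟨hb', hc', hw'⟩ := h.mem_of_tendsto ha hb hc hd hmem hball
  replace hax : dist a' x ≤ S := le_of_tendsto (ha.dist tendsto_const_nhds) (.of_forall hax)
  exact ⟨a', hax.trans_lt hSρ, mem_iUnion₂.2 ⟨b', hb', mem_iUnion₂.2 ⟨c', hc', hw'⟩⟩⟩

end CompositionRegularOn

end Composition

theorem openness_of_composition_near_point_general
    {X Y Z W : Type*} [NormedAddCommGroup X] [CompleteSpace X]
    [NormedAddCommGroup Y] [CompleteSpace Y]
    [NormedAddCommGroup Z] [NormedSpace ℝ Z] [CompleteSpace Z]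
    [NormedAddCommGroup W] [NormedSpace ℝ W]
    (F₁ : X → Set Y) (F₂ : X → Set Z) (G : Y → Z → Set W)
    (x₀ : X) (y₀ : Y) (z₀ : Z) (w₀ : W)
    (L M C D : ℝ) (hL : 0 < L) (hM : 0 < M) (hD : 0 ≤ D)
    -- (i) local closedness of the three graphs
    (hcl₁ : ∃ r > 0, IsClosed ({q : X × Y | q.2 ∈ F₁ q.1} ∩ Metric.closedBall (x₀, y₀) r))
    (hcl₂ : ∃ r > 0, IsClosed ({q : X × Z | q.2 ∈ F₂ q.1} ∩ Metric.closedBall (x₀, z₀) r))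
    (hclG : ∃ r > 0, IsClosed ({q : (Y × Z) × W | q.2 ∈ G q.1.1 q.1.2} ∩
      Metric.closedBall ((y₀, z₀), w₀) r))
    -- (ii) F₁ is L-open around (x₀, y₀)
    (hF₁ : ∃ ε > 0, ∃ U ∈ nhds x₀, ∃ V ∈ nhds y₀,
      ∀ ρ ∈ Ioo (0:ℝ) ε, ∀ x ∈ U, ∀ y ∈ V, y ∈ F₁ x →
        ball y (ρ * L) ⊆ ⋃ x' ∈ ball x ρ, F₁ x')
    -- (iii) F₂ is M-Lipschitz-like around (x₀, z₀)
    (hF₂ : ∃ U ∈ nhds x₀, ∃ V ∈ nhds z₀, ∀ x ∈ U, ∀ u ∈ U,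
      F₂ x ∩ V ⊆ F₂ u + (M * ‖x - u‖) • Metric.closedBall (0:Z) 1)
    -- (iv) G is C-open w.r.t. y uniformly in z around ((y₀,z₀),w₀)
    (hGo : ∃ ε > 0, ∃ V ∈ nhds y₀, ∃ V' ∈ nhds z₀, ∃ V'' ∈ nhds w₀,
      ∀ ρ ∈ Ioo (0:ℝ) ε, ∀ z ∈ V', ∀ y ∈ V, ∀ w ∈ V'', w ∈ G y z →
        ball w (ρ * C) ⊆ ⋃ y' ∈ ball y ρ, G y' z)
    -- (v) G is D-Lipschitz-like w.r.t. z uniformly in y around ((y₀,z₀),w₀)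
    (hGl : ∃ V ∈ nhds y₀, ∃ V' ∈ nhds z₀, ∃ V'' ∈ nhds w₀,
      ∀ y ∈ V, ∀ z ∈ V', ∀ z' ∈ V',
        G y z ∩ V'' ⊆ G y z' + (D * ‖z - z'‖) • Metric.closedBall (0:W) 1)
    -- (vi)
    (hrate : 0 < L * C - M * D) :
    ∃ ε > 0, ∀ ρ ∈ Ioo (0:ℝ) (ε / 2),
      ∀ x ∈ ball x₀ (ε / 2), ∀ y ∈ ball y₀ (ε / 2), ∀ z ∈ ball z₀ (ε / 2),
        ∀ w ∈ ball w₀ (ε / 2), y ∈ F₁ x → z ∈ F₂ x → w ∈ G y z →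
          ball w ((L * C - M * D) * ρ) ⊆
            ⋃ x' ∈ ball x ρ, ⋃ y' ∈ F₁ x', ⋃ z' ∈ F₂ x', G y' z' := by
  have hGo' : ∃ ε > 0, ∃ V ∈ 𝓝 y₀, ∃ V' ∈ 𝓝 z₀, ∃ V'' ∈ 𝓝 w₀,
      ∀ z ∈ V', IsOpenAtRateOn (G · z) C ε V V'' := by
    obtain ⟨ε, hε, V, hV, V', hV', V'', hV'', hGo⟩ := hGo
    exact ⟨ε, hε, V, hV, V', hV', V'', hV'', fun z hz ρ hρ => hGo ρ hρ z hz⟩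
  obtain ⟨r, hr, hreg⟩ :=
    (eventually_compositionRegularOn hF₁ hF₂ hGo' hGl hcl₁ hcl₂ hclG).exists_gt
  have hMD : 0 ≤ M * D := mul_nonneg hM.le hD
  have hLC : 0 < L * C := by linarith
  have hK : 0 < 1 + L + M + L * C := by linarith
  refine ⟨r / (1 + L + M + L * C), div_pos hr hK, ?_⟩
  rintro ρ ⟨hρ, hρε⟩ x hx y hy z hz w hw hyx hzx hwyz w' hw'
  set ε := r / (1 + L + M + L * C)
  have hε : 0 < ε := div_pos hr hK
  have hrε : r = (1 + L + M + L * C) * ε := (mul_div_cancel₀ _ hK.ne').symm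
  have hLρ := mul_le_mul_of_nonneg_left hρε.le hL.le
  have hMρ := mul_le_mul_of_nonneg_left hρε.le hM.le
  have hLCρ := mul_le_mul_of_nonneg_left hρε.le hLC.le
  have hLε := mul_pos hL hε
  have hMε := mul_pos hM hε
  have hLCε := mul_pos hLC hε
  have hMDρ := mul_nonneg hMD hρ.le
  rw [mem_ball] at hx hy hz hw hw'
  obtain ⟨x', hx'x, hx'⟩ := hreg.exists_mem_compositionMap hL hM.le hD hrate hρ
    (by linarith) (by linarith) (by linarith) (by linarith [dist_triangle w' w w₀]) hyx hzx
    hwyz hw'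
  exact mem_iUnion₂.2 ⟨x', mem_ball.2 hx'x, hx'⟩

/-- Openness at a linear rate of the composition `H(x) = G(F₁(x), F₂(x))` at points of
`Gr H` whose intermediate points lie near the reference point. -/
theorem openness_of_composition_near_point
    {X Y Z W : Type*} [NormedAddCommGroup X] [NormedSpace ℝ X] [CompleteSpace X]
    [NormedAddCommGroup Y] [NormedSpace ℝ Y] [CompleteSpace Y]
    [NormedAddCommGroup Z] [NormedSpace ℝ Z] [CompleteSpace Z]
    [NormedAddCommGroup W] [NormedSpace ℝ W] [CompleteSpace W]
    (F₁ : X → Set Y) (F₂ : X → Set Z) (G : Y → Z → Set W)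
    (x₀ : X) (y₀ : Y) (z₀ : Z) (w₀ : W)
    (hy : y₀ ∈ F₁ x₀) (hz : z₀ ∈ F₂ x₀) (hw : w₀ ∈ G y₀ z₀)
    (L M C D : ℝ) (hL : 0 < L) (hM : 0 < M) (hC : 0 < C) (hD : 0 ≤ D)
    -- (i) local closedness of the three graphs
    (hcl₁ : ∃ r > 0, IsClosed ({q : X × Y | q.2 ∈ F₁ q.1} ∩ Metric.closedBall (x₀, y₀) r))
    (hcl₂ : ∃ r > 0, IsClosed ({q : X × Z | q.2 ∈ F₂ q.1} ∩ Metric.closedBall (x₀, z₀) r))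
    (hclG : ∃ r > 0, IsClosed ({q : (Y × Z) × W | q.2 ∈ G q.1.1 q.1.2} ∩
      Metric.closedBall ((y₀, z₀), w₀) r))
    -- (ii) F₁ is L-open around (x₀, y₀)
    (hF₁ : ∃ ε > 0, ∃ U ∈ nhds x₀, ∃ V ∈ nhds y₀,
      ∀ ρ ∈ Ioo (0:ℝ) ε, ∀ x ∈ U, ∀ y ∈ V, y ∈ F₁ x →
        ball y (ρ * L) ⊆ ⋃ x' ∈ ball x ρ, F₁ x')
    -- (iii) F₂ is M-Lipschitz-like around (x₀, z₀)
    (hF₂ : ∃ U ∈ nhds x₀, ∃ V ∈ nhds z₀, ∀ x ∈ U, ∀ u ∈ U,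
      F₂ x ∩ V ⊆ F₂ u + (M * ‖x - u‖) • Metric.closedBall (0:Z) 1)
    -- (iv) G is C-open w.r.t. y uniformly in z around ((y₀,z₀),w₀)
    (hGo : ∃ ε > 0, ∃ V ∈ nhds y₀, ∃ V' ∈ nhds z₀, ∃ V'' ∈ nhds w₀,
      ∀ ρ ∈ Ioo (0:ℝ) ε, ∀ z ∈ V', ∀ y ∈ V, ∀ w ∈ V'', w ∈ G y z →
        ball w (ρ * C) ⊆ ⋃ y' ∈ ball y ρ, G y' z)
    -- (v) G is D-Lipschitz-like w.r.t. z uniformly in y around ((y₀,z₀),w₀)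
    (hGl : ∃ V ∈ nhds y₀, ∃ V' ∈ nhds z₀, ∃ V'' ∈ nhds w₀,
      ∀ y ∈ V, ∀ z ∈ V', ∀ z' ∈ V',
        G y z ∩ V'' ⊆ G y z' + (D * ‖z - z'‖) • Metric.closedBall (0:W) 1)
    -- (vi)
    (hrate : 0 < L * C - M * D) :
    ∃ ε > 0, ∀ ρ ∈ Ioo (0:ℝ) (ε / 2),
      ∀ x ∈ ball x₀ (ε / 2), ∀ y ∈ ball y₀ (ε / 2), ∀ z ∈ ball z₀ (ε / 2),
        ∀ w ∈ ball w₀ (ε / 2), y ∈ F₁ x → z ∈ F₂ x → w ∈ G y z →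
          ball w ((L * C - M * D) * ρ) ⊆
            ⋃ x' ∈ ball x ρ, ⋃ y' ∈ F₁ x', ⋃ z' ∈ F₂ x', G y' z' :=
  openness_of_composition_near_point_general F₁ F₂ G x₀ y₀ z₀ w₀ L M C D hL hM hD hcl₁ hcl₂ hclG hF₁
    hF₂ hGo hGl hrate
end

section
/- Let X, Y, Z be Banach spaces, F : X ⇉ Y and G : X × Y ⇉ Z with ȳ ∈ F(x̄), z̄ ∈ G(x̄,ȳ), graphs locally closed, Φ(x) := G(x, F(x)). Assume G is open at linear rate C > 0 with respect to x uniformly in y around ((x̄,ȳ),z̄), G is Lipschitz-like with respect to y uniformly in x with constant D ≥ 0, F is Lipschitz-like around (x̄,ȳ) with constant M > 0, and C − MD > 0. Then there exists ε > 0 such that for every ρ ∈ (0,ε) and every (x,y,z) ∈ B(x̄,ε) × B(ȳ,ε) × B(z̄,ε) with y ∈ F(x) and z ∈ G(x,y), B(z, (C−MD)ρ) ⊆ Φ(B(x,ρ)). -/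
/-!
Lyusternik–Graves iteration. Given `y ∈ F x`, `z ∈ G x y` and a target `w`, openness of `G` in
`x` moves `x` by some `σ` to `x'` with `w ∈ G x' y`; Lipschitz-likeness of `F` gives `y' ∈ F x'`
with `‖y - y'‖ ≤ M σ`, and Lipschitz-likeness of `G` in `y` gives `z' ∈ G x' y'` with
`‖w - z'‖ ≤ D M σ`. Because `M D < C`, the step lengths `σₙ = S (1 - q) qⁿ` with `M D / C < q < 1`
keep `‖w - zₙ‖ < C σₙ` at every step, so the iterates are Cauchy, the total displacement of `x` is
at most `S < ρ`, and local closedness of the graphs puts the limit `(x', y', w)` in the graph of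
`G` over the graph of `F`.
-/

open Set Metric Pointwise Filter Topology

theorem exists_dist_le_of_mem_add_smul_closedBall {E : Type*} [NormedAddCommGroup E]
    [NormedSpace ℝ E] {A : Set E} {r : ℝ} {v : E} (hr : 0 ≤ r)
    (hv : v ∈ A + r • closedBall (0:E) 1) : ∃ v' ∈ A, dist v v' ≤ r := by
  rw [smul_unitClosedBall_of_nonneg hr] at hv
  obtain ⟨v', hv', b, hb, rfl⟩ := hv
  exact ⟨v', hv', by simpa [dist_eq_norm] using hb⟩

theorem IsClosed.inter_of_subset {α : Type*} [TopologicalSpace α] {s t t' : Set α}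
    (h : IsClosed (s ∩ t)) (ht' : IsClosed t') (hsub : t' ⊆ t) : IsClosed (s ∩ t') := by
  rw [← inter_eq_right.2 hsub, ← inter_assoc]
  exact h.inter ht'

theorem mem_comp_of_tendsto {ι X Y Z : Type*} [TopologicalSpace X] [TopologicalSpace Y]
    [TopologicalSpace Z] {F : X → Set Y} {G : X → Y → Set Z} {U : Set X} {V : Set Y} {W : Set Z}
    (hclF : IsClosed ({p : X × Y | p.2 ∈ F p.1} ∩ U ×ˢ V))
    (hclG : IsClosed ({p : (X × Y) × Z | p.2 ∈ G p.1.1 p.1.2} ∩ (U ×ˢ V) ×ˢ W))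
    {l : Filter ι} [l.NeBot] {u : ι → X} {v : ι → Y} {s : ι → Z} {x : X} {y : Y} {z : Z}
    (hu : Tendsto u l (𝓝 x)) (hv : Tendsto v l (𝓝 y)) (hs : Tendsto s l (𝓝 z))
    (hF : ∀ i, v i ∈ F (u i)) (hG : ∀ i, s i ∈ G (u i) (v i))
    (hmem : ∀ i, u i ∈ U ∧ v i ∈ V ∧ s i ∈ W) : y ∈ F x ∧ z ∈ G x y :=
  ⟨(hclF.mem_of_tendsto (hu.prodMk_nhds hv) (Eventually.of_forall fun i =>
      ⟨hF i, (hmem i).1, (hmem i).2.1⟩)).1,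
    (hclG.mem_of_tendsto ((hu.prodMk_nhds hv).prodMk_nhds hs) (Eventually.of_forall fun i =>
      ⟨hG i, ⟨(hmem i).1, (hmem i).2.1⟩, (hmem i).2.2⟩)).1⟩

theorem exists_seq_of_forall_exists {α : Type*} {P : ℕ → α → Prop} {R : ℕ → α → α → Prop}
    {a : α} (h₀ : P 0 a) (h : ∀ n a, P n a → ∃ b, P (n + 1) b ∧ R n a b) :
    ∃ f : ℕ → α, f 0 = a ∧ ∀ n, P n (f n) ∧ R n (f n) (f (n + 1)) := by
  choose! g hg using h
  let f : ℕ → α := fun n => Nat.rec a g n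
  have hP : ∀ n, P n (f n) := fun n => by
    induction n with
    | zero => exact h₀
    | succ n ih => exact (hg n _ ih).1
  exact ⟨f, rfl, fun n => ⟨hP n, (hg n _ (hP n)).2⟩⟩

theorem mul_one_sub_pow_le {S q : ℝ} (hS : 0 ≤ S) (hq : 0 ≤ q) (n : ℕ) :
    S * (1 - q ^ n) ≤ S :=
  mul_le_of_le_one_right hS (sub_le_self _ (pow_nonneg hq n))

theorem exists_geometric_params {C L d ρ : ℝ} (hC : 0 < C) (hL : L < C) (hd : 0 ≤ d)
    (h : d < (C - L) * ρ) : ∃ S q : ℝ, S < ρ ∧ L < C * q ∧ q < 1 ∧ d < C * (1 - q) * S := by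
  have hCL : 0 < C - L := sub_pos.2 hL
  obtain ⟨S, hdS, hSρ⟩ := exists_between ((div_lt_iff₀' hCL).2 h)
  have hS : 0 < S := (div_nonneg hd hCL.le).trans_lt hdS
  obtain ⟨c, hdc, hc⟩ := exists_between ((div_lt_iff₀ hS).2 ((div_lt_iff₀' hCL).1 hdS))
  have hc0 : 0 < c := (div_nonneg hd hS.le).trans_lt hdc
  refine ⟨S, 1 - c / C, hSρ, ?_, ?_, ?_⟩
  · rw [mul_sub, mul_one, mul_div_cancel₀ _ hC.ne']
    linarith
  · linarith [div_pos hc0 hC]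
  · rw [sub_sub_cancel, mul_div_cancel₀ _ hC.ne']
    exact (div_lt_iff₀ hS).1 hdc

section Definitions

variable {X Y Z : Type*}

def OpenAtRateOnFst [PseudoMetricSpace X] [PseudoMetricSpace Z] (G : X → Y → Set Z) (C ε : ℝ)
    (U : Set X) (V : Set Y) (W : Set Z) : Prop :=
  ∀ ρ ∈ Ioo (0:ℝ) ε, ∀ y ∈ V, ∀ x ∈ U, ∀ z ∈ W, z ∈ G x y →
    ball z (ρ * C) ⊆ ⋃ x' ∈ ball x ρ, G x' y

def LipschitzLikeOnSnd [NormedAddCommGroup Y] [NormedAddCommGroup Z] [NormedSpace ℝ Z]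
    (G : X → Y → Set Z) (D : ℝ) (U : Set X) (V : Set Y) (W : Set Z) : Prop :=
  ∀ x ∈ U, ∀ y ∈ V, ∀ y' ∈ V, G x y ∩ W ⊆ G x y' + (D * ‖y - y'‖) • closedBall (0:Z) 1

def LipschitzLikeOn [NormedAddCommGroup X] [NormedAddCommGroup Y] [NormedSpace ℝ Y]
    (F : X → Set Y) (M : ℝ) (U : Set X) (V : Set Y) : Prop :=
  ∀ x ∈ U, ∀ u ∈ U, F x ∩ V ⊆ F u + (M * ‖x - u‖) • closedBall (0:Y) 1

end Definitions

theorem OpenAtRateOnFst.mono {X Y Z : Type*} [PseudoMetricSpace X] [PseudoMetricSpace Z]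
    {G : X → Y → Set Z} {C ε : ℝ} {U U' : Set X} {V V' : Set Y} {W W' : Set Z}
    (h : OpenAtRateOnFst G C ε U V W) (hU : U' ⊆ U) (hV : V' ⊆ V) (hW : W' ⊆ W) :
    OpenAtRateOnFst G C ε U' V' W' :=
  fun ρ hρ y hy x hx z hz => h ρ hρ y (hV hy) x (hU hx) z (hW hz)

theorem LipschitzLikeOnSnd.mono {X Y Z : Type*} [NormedAddCommGroup Y] [NormedAddCommGroup Z]
    [NormedSpace ℝ Z] {G : X → Y → Set Z} {D : ℝ} {U U' : Set X} {V V' : Set Y} {W W' : Set Z}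
    (h : LipschitzLikeOnSnd G D U V W) (hU : U' ⊆ U) (hV : V' ⊆ V) (hW : W' ⊆ W) :
    LipschitzLikeOnSnd G D U' V' W' :=
  fun x hx y hy y' hy' =>
    (inter_subset_inter_right _ hW).trans (h x (hU hx) y (hV hy) y' (hV hy'))

theorem LipschitzLikeOn.mono {X Y : Type*} [NormedAddCommGroup X] [NormedAddCommGroup Y]
    [NormedSpace ℝ Y] {F : X → Set Y} {M : ℝ} {U U' : Set X} {V V' : Set Y}
    (h : LipschitzLikeOn F M U V) (hU : U' ⊆ U) (hV : V' ⊆ V) : LipschitzLikeOn F M U' V' :=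
  fun x hx u hu => (inter_subset_inter_right _ hV).trans (h x (hU hx) u (hU hu))

section Composition

variable {X Y Z : Type*} [NormedAddCommGroup X] [NormedAddCommGroup Y] [NormedSpace ℝ Y]
  [NormedAddCommGroup Z] [NormedSpace ℝ Z] {F : X → Set Y} {G : X → Y → Set Z}
  {U : Set X} {V : Set Y} {W : Set Z} {M C D ε S q : ℝ} {x : X} {y : Y} {w : Z}

theorem exists_composition_step (hGo : OpenAtRateOnFst G C ε U V W)
    (hGl : LipschitzLikeOnSnd G D U V W) (hF : LipschitzLikeOn F M U V) (hM : 0 ≤ M)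
    (hD : 0 ≤ D) {σ : ℝ} (hσ : σ ∈ Ioo 0 ε) {u : X} {v : Y} {s : Z} (hU : ball u σ ⊆ U)
    (hV : closedBall v (M * σ) ⊆ V) (hs : s ∈ W) (hw : w ∈ W) (hvF : v ∈ F u)
    (hsG : s ∈ G u v) (hws : dist w s < σ * C) :
    ∃ u' v' s', v' ∈ F u' ∧ s' ∈ G u' v' ∧ dist u u' < σ ∧ dist v v' ≤ M * σ ∧
      dist w s' ≤ D * (M * σ) := by
  have hu : u ∈ U := hU (mem_ball_self hσ.1)
  have hv : v ∈ V := hV (mem_closedBall_self (mul_nonneg hM hσ.1.le))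
  obtain ⟨u', hu', hwG⟩ := mem_iUnion₂.1 (hGo σ hσ v hv u hu s hs hsG (mem_ball.2 hws))
  have huu' : dist u u' < σ := mem_ball'.1 hu'
  obtain ⟨v', hv'F, hvv'⟩ := exists_dist_le_of_mem_add_smul_closedBall (by positivity)
    (hF u hu u' (hU hu') ⟨hvF, hv⟩)
  have hvv'σ : dist v v' ≤ M * σ := hvv'.trans (by rw [← dist_eq_norm]; gcongr)
  obtain ⟨s', hs'G, hws'⟩ := exists_dist_le_of_mem_add_smul_closedBall (by positivity)
    (hGl u' (hU hu') v hv v' (hV (mem_closedBall'.2 hvv'σ)) ⟨hwG, hw⟩)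
  exact ⟨u', v', s', hv'F, hs'G, huu', hvv'σ, hws'.trans (by rw [← dist_eq_norm]; gcongr)⟩

theorem exists_next_iterate (hGo : OpenAtRateOnFst G C ε U V W)
    (hGl : LipschitzLikeOnSnd G D U V W) (hF : LipschitzLikeOn F M U V) (hM : 0 ≤ M)
    (hD : 0 ≤ D) (hC : 0 < C) (hq0 : 0 < q) (hS : 0 < S) (hSε : S < ε) (hMD : M * D < C * q)
    (hq : q < 1) (hxU : closedBall x S ⊆ U) (hyV : closedBall y (M * S) ⊆ V) (hwW : closedBall w (C * S) ⊆ W)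
    {n : ℕ} {u : X} {v : Y} {s : Z} (hvF : v ∈ F u) (hsG : s ∈ G u v)
    (hux : dist x u ≤ S * (1 - q ^ n)) (hvy : dist y v ≤ M * (S * (1 - q ^ n)))
    (hws : dist w s < C * (S * (1 - q) * q ^ n)) :
    ∃ u' v' s', (v' ∈ F u' ∧ s' ∈ G u' v' ∧ dist x u' ≤ S * (1 - q ^ (n + 1)) ∧
      dist y v' ≤ M * (S * (1 - q ^ (n + 1))) ∧ dist w s' < C * (S * (1 - q) * q ^ (n + 1))) ∧
      dist u u' ≤ S * (1 - q) * q ^ n ∧ dist v v' ≤ M * (S * (1 - q) * q ^ n) := by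
  set σ := S * (1 - q) * q ^ n
  have hσ : 0 < σ := mul_pos (mul_pos hS (sub_pos.2 hq)) (pow_pos hq0 n)
  have hsum : S * (1 - q ^ n) + σ = S * (1 - q ^ (n + 1)) := by ring
  have hSn : S * (1 - q ^ (n + 1)) ≤ S := mul_one_sub_pow_le hS.le hq0.le _
  have hσS : σ ≤ S := by linarith [dist_nonneg (x := x) (y := u)]
  have hball : ball u σ ⊆ U := by
    refine (ball_subset_ball' ?_).trans (ball_subset_closedBall.trans hxU)
    linarith [dist_comm x u]
  have hclosedBall : closedBall v (M * σ) ⊆ V := by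
    refine (closedBall_subset_closedBall' ?_).trans hyV
    nlinarith [dist_comm y v]
  have hsW : s ∈ W := hwW (mem_closedBall'.2 (hws.le.trans (by gcongr)))
  obtain ⟨u', v', s', hv'F, hs'G, huu', hvv', hws'⟩ :=
    exists_composition_step hGo hGl hF hM hD ⟨hσ, by linarith⟩ hball hclosedBall hsW
      (hwW (mem_closedBall_self (by positivity))) hvF hsG (by linarith)
  refine ⟨u', v', s', ⟨hv'F, hs'G, ?_, ?_, ?_⟩, huu'.le, hvv'⟩
  · linarith [dist_triangle x u u']
  · nlinarith [dist_triangle y v v']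
  · calc dist w s' ≤ D * (M * σ) := hws'
      _ = M * D * σ := by ring
      _ < C * q * σ := mul_lt_mul_of_pos_right hMD hσ
      _ = C * (S * (1 - q) * q ^ (n + 1)) := by ring

theorem exists_dist_le_mem_comp_of_dist_lt [CompleteSpace X] [CompleteSpace Y]
    (hGo : OpenAtRateOnFst G C ε U V W) (hGl : LipschitzLikeOnSnd G D U V W)
    (hF : LipschitzLikeOn F M U V) (hclF : IsClosed ({p : X × Y | p.2 ∈ F p.1} ∩ U ×ˢ V))
    (hclG : IsClosed ({p : (X × Y) × Z | p.2 ∈ G p.1.1 p.1.2} ∩ (U ×ˢ V) ×ˢ W))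
    (hM : 0 ≤ M) (hD : 0 ≤ D) (hC : 0 < C) (hSε : S < ε) (hMD : M * D < C * q) (hq : q < 1)
    (hxU : closedBall x S ⊆ U) (hyV : closedBall y (M * S) ⊆ V) (hwW : closedBall w (C * S) ⊆ W)
    {z : Z} (hyF : y ∈ F x) (hzG : z ∈ G x y) (hwz : dist w z < C * (1 - q) * S) :
    ∃ x', dist x x' ≤ S ∧ ∃ y' ∈ F x', w ∈ G x' y' := by
  have hq0 : 0 < q := pos_of_mul_pos_right ((mul_nonneg hM hD).trans_lt hMD) hC.le
  have hS : 0 < S :=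
    pos_of_mul_pos_right (dist_nonneg.trans_lt hwz) (mul_pos hC (sub_pos.2 hq)).le
  obtain ⟨p, hp0, hp⟩ := exists_seq_of_forall_exists (a := (x, y, z))
    (P := fun n p => p.2.1 ∈ F p.1 ∧ p.2.2 ∈ G p.1 p.2.1 ∧ dist x p.1 ≤ S * (1 - q ^ n) ∧
      dist y p.2.1 ≤ M * (S * (1 - q ^ n)) ∧ dist w p.2.2 < C * (S * (1 - q) * q ^ n))
    (R := fun n p p' => dist p.1 p'.1 ≤ S * (1 - q) * q ^ n ∧
      dist p.2.1 p'.2.1 ≤ M * (S * (1 - q) * q ^ n))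
    ⟨hyF, hzG, by simp, by simp, by convert hwz using 1; ring⟩
    fun n ⟨_, _, _⟩ ⟨hvF, hsG, hux, hvy, hws⟩ => by
      obtain ⟨u', v', s', h⟩ := exists_next_iterate hGo hGl hF hM hD hC hq0 hS hSε hMD hq hxU hyV
        hwW hvF hsG hux hvy hws
      exact ⟨(u', v', s'), h⟩
  set u := fun n => (p n).1
  set v := fun n => (p n).2.1
  set s := fun n => (p n).2.2
  obtain ⟨x', hx'⟩ := cauchySeq_tendsto_of_complete
    (cauchySeq_of_le_geometric q (S * (1 - q)) hq fun n => (hp n).2.1)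
  obtain ⟨y', hy'⟩ := cauchySeq_tendsto_of_complete
    (cauchySeq_of_le_geometric q (M * (S * (1 - q))) hq fun n => by
      simpa only [mul_assoc] using (hp n).2.2)
  have hs : Tendsto s atTop (𝓝 w) := by
    rw [tendsto_iff_dist_tendsto_zero]
    refine squeeze_zero (fun _ => dist_nonneg) (fun n => ?_) (by
      simpa using
        (tendsto_pow_atTop_nhds_zero_of_lt_one hq0.le hq).const_mul (C * (S * (1 - q))))
    rw [dist_comm, mul_assoc]
    exact (hp n).1.2.2.2.2.le
  have hxx' : dist x x' ≤ S := by
    have := dist_le_of_le_geometric_of_tendsto₀ q (S * (1 - q)) hq (fun n => (hp n).2.1) hx'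
    rwa [hp0, mul_div_cancel_right₀ _ (sub_pos.2 hq).ne'] at this
  have hmem : ∀ n, u n ∈ U ∧ v n ∈ V ∧ s n ∈ W := fun n => by
    have hSn : S * (1 - q ^ n) ≤ S := mul_one_sub_pow_le hS.le hq0.le n
    have hσn : S * (1 - q) * q ^ n ≤ S := by
      rw [mul_assoc]
      exact mul_le_of_le_one_right hS.le
        (mul_le_one₀ (by linarith) (pow_nonneg hq0.le n) (pow_le_one₀ hq0.le hq.le))
    obtain ⟨-, -, hun, hvn, hsn⟩ := (hp n).1
    exact ⟨hxU (mem_closedBall'.2 (hun.trans hSn)),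
      hyV (mem_closedBall'.2 (hvn.trans (by gcongr))),
      hwW (mem_closedBall'.2 (hsn.le.trans (by gcongr)))⟩
  exact ⟨x', hxx', y', mem_comp_of_tendsto hclF hclG hx' hy' hs (fun n => (hp n).1.1)
    (fun n => (hp n).1.2.1) hmem⟩

theorem ball_subset_biUnion_comp_of_closedBall_subset [CompleteSpace X] [CompleteSpace Y]
    (hGo : OpenAtRateOnFst G C ε U V W) (hGl : LipschitzLikeOnSnd G D U V W)
    (hF : LipschitzLikeOn F M U V) (hclF : IsClosed ({p : X × Y | p.2 ∈ F p.1} ∩ U ×ˢ V))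
    (hclG : IsClosed ({p : (X × Y) × Z | p.2 ∈ G p.1.1 p.1.2} ∩ (U ×ˢ V) ×ˢ W))
    (hM : 0 ≤ M) (hD : 0 ≤ D) (hC : 0 < C) (hrate : M * D < C) {ρ : ℝ} (hρ : ρ ≤ ε)
    (hxU : closedBall x ρ ⊆ U) (hyV : closedBall y (M * ρ) ⊆ V) {z : Z}
    (hzW : closedBall z (2 * C * ρ) ⊆ W) (hyF : y ∈ F x) (hzG : z ∈ G x y) :
    ball z ((C - M * D) * ρ) ⊆ ⋃ x' ∈ ball x ρ, ⋃ y' ∈ F x', G x' y' := by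
  intro w hw
  have hwz : dist w z < (C - M * D) * ρ := mem_ball.1 hw
  have hρ0 : 0 < ρ := pos_of_mul_pos_right (dist_nonneg.trans_lt hwz) (sub_pos.2 hrate).le
  obtain ⟨S, q, hSρ, hMD, hq, hwz'⟩ := exists_geometric_params hC hrate dist_nonneg hwz
  have hwW : closedBall w (C * S) ⊆ W := by
    refine (closedBall_subset_closedBall' ?_).trans hzW
    have : C * S ≤ C * ρ := by gcongr
    nlinarith [mul_nonneg (mul_nonneg hM hD) hρ0.le]
  obtain ⟨x', hxx', y', hy'F, hwG⟩ := exists_dist_le_mem_comp_of_dist_lt hGo hGl hF hclF hclG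
    hM hD hC (hSρ.trans_le hρ) hMD hq ((closedBall_subset_closedBall hSρ.le).trans hxU)
    ((closedBall_subset_closedBall (by gcongr)).trans hyV) hwW hyF hzG hwz'
  exact mem_iUnion₂.2 ⟨x', mem_ball'.2 (hxx'.trans_lt hSρ), mem_iUnion₂.2 ⟨y', hy'F, hwG⟩⟩

theorem exists_forall_ball_subset_biUnion_comp [CompleteSpace X] [CompleteSpace Y] {x₀ : X}
    {y₀ : Y} {z₀ : Z} {δ : ℝ} (hδ : 0 < δ) (hε : 0 < ε)
    (hGo : OpenAtRateOnFst G C ε (closedBall x₀ δ) (closedBall y₀ δ) (closedBall z₀ δ))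
    (hGl : LipschitzLikeOnSnd G D (closedBall x₀ δ) (closedBall y₀ δ) (closedBall z₀ δ))
    (hF : LipschitzLikeOn F M (closedBall x₀ δ) (closedBall y₀ δ))
    (hclF : IsClosed ({p : X × Y | p.2 ∈ F p.1} ∩ closedBall (x₀, y₀) δ))
    (hclG : IsClosed ({p : (X × Y) × Z | p.2 ∈ G p.1.1 p.1.2} ∩ closedBall ((x₀, y₀), z₀) δ))
    (hM : 0 ≤ M) (hD : 0 ≤ D) (hC : 0 < C) (hrate : M * D < C) :
    ∃ ε' > 0, ∀ ρ ∈ Ioo (0:ℝ) ε', ∀ x ∈ ball x₀ ε', ∀ y ∈ ball y₀ ε', ∀ z ∈ ball z₀ ε',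
      y ∈ F x → z ∈ G x y → ball z ((C - M * D) * ρ) ⊆ ⋃ x' ∈ ball x ρ, ⋃ y' ∈ F x', G x' y' := by
  rw [← closedBall_prod_same] at hclF
  rw [← closedBall_prod_same, ← closedBall_prod_same] at hclG
  have hK : 0 < 2 + M + 2 * C := by positivity
  set ε' := min ε (δ / (2 + M + 2 * C))
  have hε'δ : (2 + M + 2 * C) * ε' ≤ δ := (le_div_iff₀' hK).1 (min_le_right _ _)
  refine ⟨ε', lt_min hε (div_pos hδ hK), fun ρ ⟨hρ0, hρε'⟩ x hx y hy z hz => ?_⟩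
  have hMρ : M * ρ ≤ M * ε' := by gcongr
  have hCρ : C * ρ ≤ C * ε' := by gcongr
  have hMε : 0 ≤ M * ε' := by positivity
  have hCε : 0 ≤ C * ε' := by positivity
  rw [mem_ball] at hx hy hz
  refine ball_subset_biUnion_comp_of_closedBall_subset hGo hGl hF hclF hclG hM hD hC hrate
    (hρε'.le.trans (min_le_left _ _)) (closedBall_subset_closedBall' ?_)
    (closedBall_subset_closedBall' ?_) (closedBall_subset_closedBall' ?_) <;>
  linarith

end Composition

theorem openness_of_composition_B_general
    {X Y Z : Type*} [NormedAddCommGroup X] [CompleteSpace X]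
    [NormedAddCommGroup Y] [NormedSpace ℝ Y] [CompleteSpace Y]
    [NormedAddCommGroup Z] [NormedSpace ℝ Z]
    (F : X → Set Y) (G : X → Y → Set Z)
    (x₀ : X) (y₀ : Y) (z₀ : Z)
    (M C D : ℝ) (hM : 0 < M) (hC : 0 < C) (hD : 0 ≤ D)
    (hclF : ∃ r > 0, IsClosed ({q : X × Y | q.2 ∈ F q.1} ∩ Metric.closedBall (x₀, y₀) r))
    (hclG : ∃ r > 0, IsClosed ({q : (X × Y) × Z | q.2 ∈ G q.1.1 q.1.2} ∩
      Metric.closedBall ((x₀, y₀), z₀) r))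
    -- (i) G is C-open w.r.t. x uniformly in y around ((x₀,y₀),z₀)
    (hGo : ∃ ε > 0, ∃ U ∈ nhds x₀, ∃ V ∈ nhds y₀, ∃ V' ∈ nhds z₀,
      ∀ ρ ∈ Ioo (0:ℝ) ε, ∀ y ∈ V, ∀ x ∈ U, ∀ z ∈ V', z ∈ G x y →
        ball z (ρ * C) ⊆ ⋃ x' ∈ ball x ρ, G x' y)
    -- (ii) G is D-Lipschitz-like w.r.t. y uniformly in x around ((x₀,y₀),z₀)
    (hGl : ∃ U ∈ nhds x₀, ∃ V ∈ nhds y₀, ∃ V' ∈ nhds z₀,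
      ∀ x ∈ U, ∀ y ∈ V, ∀ y' ∈ V,
        G x y ∩ V' ⊆ G x y' + (D * ‖y - y'‖) • Metric.closedBall (0:Z) 1)
    -- (iii) F is M-Lipschitz-like around (x₀,y₀)
    (hF : ∃ U ∈ nhds x₀, ∃ V ∈ nhds y₀, ∀ x ∈ U, ∀ u ∈ U,
      F x ∩ V ⊆ F u + (M * ‖x - u‖) • Metric.closedBall (0:Y) 1)
    -- (iv)
    (hrate : 0 < C - M * D) :
    ∃ ε > 0, ∀ ρ ∈ Ioo (0:ℝ) ε,
      ∀ x ∈ ball x₀ ε, ∀ y ∈ ball y₀ ε, ∀ z ∈ ball z₀ ε,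
        y ∈ F x → z ∈ G x y →
          ball z ((C - M * D) * ρ) ⊆ ⋃ x' ∈ ball x ρ, ⋃ y' ∈ F x', G x' y' := by
  obtain ⟨rF, hrF, hclF⟩ := hclF
  obtain ⟨rG, hrG, hclG⟩ := hclG
  obtain ⟨ε, hε, U₁, hU₁, V₁, hV₁, W₁, hW₁, hGo⟩ := hGo
  obtain ⟨U₂, hU₂, V₂, hV₂, W₂, hW₂, hGl⟩ := hGl
  obtain ⟨U₃, hU₃, V₃, hV₃, hF⟩ := hF
  obtain ⟨δ, hδ, hδF, hδG, hU, hV, hW⟩ : ∃ δ, 0 < δ ∧ δ ≤ rF ∧ δ ≤ rG ∧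
      closedBall x₀ δ ⊆ U₁ ∩ U₂ ∩ U₃ ∧ closedBall y₀ δ ⊆ V₁ ∩ V₂ ∩ V₃ ∧
      closedBall z₀ δ ⊆ W₁ ∩ W₂ :=
    ((eventually_le_nhds hrF).and <| (eventually_le_nhds hrG).and <|
      (eventually_closedBall_subset (inter_mem (inter_mem hU₁ hU₂) hU₃)).and <|
      (eventually_closedBall_subset (inter_mem (inter_mem hV₁ hV₂) hV₃)).and <|
      eventually_closedBall_subset (inter_mem hW₁ hW₂)).exists_gt
  simp only [subset_inter_iff] at hU hV hW
  exact exists_forall_ball_subset_biUnion_comp hδ hε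
    (OpenAtRateOnFst.mono hGo hU.1.1 hV.1.1 hW.1)
    (LipschitzLikeOnSnd.mono hGl hU.1.2 hV.1.2 hW.2) (LipschitzLikeOn.mono hF hU.2 hV.2)
    (hclF.inter_of_subset isClosed_closedBall (closedBall_subset_closedBall hδF))
    (hclG.inter_of_subset isClosed_closedBall (closedBall_subset_closedBall hδG))
    hM.le hD hC (sub_pos.1 hrate)

/-- Openness at linear rate `C − M*D` of `Φ(x) := G(x, F(x))` at points with
intermediate points near the reference point (part (B) of the theorem). -/
theorem openness_of_composition_B
    {X Y Z : Type*} [NormedAddCommGroup X] [NormedSpace ℝ X] [CompleteSpace X]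
    [NormedAddCommGroup Y] [NormedSpace ℝ Y] [CompleteSpace Y]
    [NormedAddCommGroup Z] [NormedSpace ℝ Z] [CompleteSpace Z]
    (F : X → Set Y) (G : X → Y → Set Z)
    (x₀ : X) (y₀ : Y) (z₀ : Z) (hy : y₀ ∈ F x₀) (hz : z₀ ∈ G x₀ y₀)
    (M C D : ℝ) (hM : 0 < M) (hC : 0 < C) (hD : 0 ≤ D)
    (hclF : ∃ r > 0, IsClosed ({q : X × Y | q.2 ∈ F q.1} ∩ Metric.closedBall (x₀, y₀) r))
    (hclG : ∃ r > 0, IsClosed ({q : (X × Y) × Z | q.2 ∈ G q.1.1 q.1.2} ∩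
      Metric.closedBall ((x₀, y₀), z₀) r))
    -- (i) G is C-open w.r.t. x uniformly in y around ((x₀,y₀),z₀)
    (hGo : ∃ ε > 0, ∃ U ∈ nhds x₀, ∃ V ∈ nhds y₀, ∃ V' ∈ nhds z₀,
      ∀ ρ ∈ Ioo (0:ℝ) ε, ∀ y ∈ V, ∀ x ∈ U, ∀ z ∈ V', z ∈ G x y →
        ball z (ρ * C) ⊆ ⋃ x' ∈ ball x ρ, G x' y)
    -- (ii) G is D-Lipschitz-like w.r.t. y uniformly in x around ((x₀,y₀),z₀)
    (hGl : ∃ U ∈ nhds x₀, ∃ V ∈ nhds y₀, ∃ V' ∈ nhds z₀,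
      ∀ x ∈ U, ∀ y ∈ V, ∀ y' ∈ V,
        G x y ∩ V' ⊆ G x y' + (D * ‖y - y'‖) • Metric.closedBall (0:Z) 1)
    -- (iii) F is M-Lipschitz-like around (x₀,y₀)
    (hF : ∃ U ∈ nhds x₀, ∃ V ∈ nhds y₀, ∀ x ∈ U, ∀ u ∈ U,
      F x ∩ V ⊆ F u + (M * ‖x - u‖) • Metric.closedBall (0:Y) 1)
    -- (iv)
    (hrate : 0 < C - M * D) :
    ∃ ε > 0, ∀ ρ ∈ Ioo (0:ℝ) ε,
      ∀ x ∈ ball x₀ ε, ∀ y ∈ ball y₀ ε, ∀ z ∈ ball z₀ ε,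
        y ∈ F x → z ∈ G x y →
          ball z ((C - M * D) * ρ) ⊆ ⋃ x' ∈ ball x ρ, ⋃ y' ∈ F x', G x' y' :=
  openness_of_composition_B_general F G x₀ y₀ z₀ M C D hM hC hD hclF hclG hGo hGl hF hrate
end
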